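/- Let Ω have N elements and fix t ≥ 1 with 2t ≤ N. The expected value over the uniform probability on E(g,h,N) of the fraction of Ω occupied by points in asymmetric t-cycles of H∘G equals (1/N) · Π_{j=0}^{t-1} (1 - (g-1)/(N-(2j+1))) · (1 - h/(N-2j)), which equals (N^{underline(2t)}/N) · #E(g,h,N-2t)/#E(g,h,N). -/

import Mathlib

open Filter

/-- The number of fixed points of a permutation of `Fin N`. -/
noncomputable def fixCard {N : ℕ} (σ : Equiv.Perm (Fin N)) : ℕ :=
  Nat.card {x : Fin N // σ x = x}

/-- The set of ordered pairs `(G, H)` of involutions of an `N`-element set with exactly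
`g` and `h` fixed points respectively. -/
def pairE (g h N : ℕ) : Set (Equiv.Perm (Fin N) × Equiv.Perm (Fin N)) :=
  {p | p.1 * p.1 = 1 ∧ p.2 * p.2 = 1 ∧ fixCard p.1 = g ∧ fixCard p.2 = h}

/-- The orbit (cycle) of a point `x` under a permutation `L`. -/
def orb {N : ℕ} (L : Equiv.Perm (Fin N)) (x : Fin N) : Set (Fin N) :=
  {y | ∃ n : ℕ, (L ^ n) x = y}

/-- The number of points of `Fin N` lying on asymmetric (i.e. not `G`-invariant) cycles
of `L = H ∘ G` of length `t`. -/
noncomputable def asymCount (N t : ℕ) (G H : Equiv.Perm (Fin N)) : ℕ :=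
  Nat.card {x : Fin N |
    ⇑G '' orb (H * G) x ≠ orb (H * G) x ∧ Nat.card (orb (H * G) x) = t}

open Equiv Function Set

open scoped Classical

/-!
Mark a point `x` on an asymmetric `t`-cycle of `L = H * G`. Since `G` conjugates `L` to `L⁻¹`,
it permutes the cycles of `L`, so the cycle of `x` and its `G`-image are disjoint and the `2t`
points `Lʲ x`, `G (Lʲ x)` (`j < t`) are distinct. On them `G` and `H` act as a fixed model pair
of fixed-point-free involutions of `Fin t × Bool`; on the other `N - 2t` points they form an
arbitrary pair in `E(g, h, N - 2t)`. Hence the marked pairs `((G, H), x)` are in bijection with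
`(Fin t × Bool ↪ Fin N) × E(g, h, N - 2t)`, and their number is `N^{(2t)} · #E(g, h, N - 2t)`.
Gluing along `Bool` in the same way gives `#I(g, M) · (M - g) = M (M - 1) · #I(g, M - 2)` for
the set `I(g, M)` of involutions of `Fin M` with `g` fixed points; since
`#E = #I(g, ·) · #I(h, ·)`, iterating it `t` times evaluates `#E(g, h, N - 2t) / #E(g, h, N)`
as the product.
-/

section FixedPoints

variable {γ δ : Type*}

lemma card_fixedPoints_permCongr (e : γ ≃ δ) (σ : Perm γ) :
    Nat.card (fixedPoints (e.permCongr σ)) = Nat.card (fixedPoints σ) :=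
  Nat.card_congr <| (e.subtypeEquiv fun x => by simp [IsFixedPt, permCongr_apply]).symm

lemma card_fixedPoints_sumCongr [Finite γ] [Finite δ] (σ : Perm γ) (τ : Perm δ) :
    Nat.card (fixedPoints (σ.sumCongr τ)) =
      Nat.card (fixedPoints σ) + Nat.card (fixedPoints τ) := by
  rw [← Nat.card_sum]
  exact Nat.card_congr <| subtypeSum.trans <|
    sumCongr (subtypeEquivRight fun _ => by simp [IsFixedPt])
      (subtypeEquivRight fun _ => by simp [IsFixedPt])

end FixedPoints

def involWithFix (γ : Type*) (g : ℕ) : Set (Perm γ) :=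
  {τ | τ * τ = 1 ∧ Nat.card (fixedPoints τ) = g}

lemma pairE_eq_prod (g h N : ℕ) :
    pairE g h N = involWithFix (Fin N) g ×ˢ involWithFix (Fin N) h := by
  ext ⟨G, H⟩
  simp only [pairE, involWithFix, mem_prod, mem_ofPred_eq]
  exact ⟨fun ⟨hG, hH, hg, hh⟩ => ⟨⟨hG, hg⟩, hH, hh⟩,
    fun ⟨⟨hG, hg⟩, hH, hh⟩ => ⟨hG, hH, hg, hh⟩⟩

lemma card_involWithFix_congr {γ δ : Type*} (e : γ ≃ δ) (g : ℕ) :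
    Nat.card (involWithFix γ g) = Nat.card (involWithFix δ g) :=
  Nat.card_congr <| e.permCongrHom.toEquiv.subtypeEquiv fun τ => by
    simp only [involWithFix, mem_ofPred_eq, MulEquiv.toEquiv_eq_coe, MulEquiv.coe_toEquiv]
    rw [← map_mul, map_eq_one_iff _ (MulEquiv.injective _), permCongrHom_coe,
      card_fixedPoints_permCongr]

section Extend

variable {α β : Type*}

noncomputable def extendPerm (f : α ↪ β) : Perm α × Perm {b // b ∉ range f} →* Perm β :=
  (Perm.subtypeCongrHom (· ∈ range f)).comp
    (((ofInjective f f.injective).permCongrHom : Perm α →* Perm (range f)).prodMap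
      (MonoidHom.id _))

variable (f : α ↪ β) (σ : Perm α) (τ : Perm {b // b ∉ range f})

lemma extendPerm_injective : Injective (extendPerm f) :=
  (Perm.subtypeCongrHom_injective _).comp <| by
    rw [MonoidHom.coe_prodMap]
    exact Prod.map_injective.2 ⟨MulEquiv.injective _, injective_id⟩

lemma extendPerm_apply_apply (a : α) : extendPerm f (σ, τ) (f a) = f (σ a) := by
  simp [extendPerm, Perm.subtypeCongr.left_apply _ _ (mem_range_self a), permCongrHom_coe,
    permCongr_apply]

lemma extendPerm_apply_coe (b : {b // b ∉ range f}) : extendPerm f (σ, τ) b = τ b := by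
  simp [extendPerm, Perm.subtypeCongr.right_apply_subtype]

lemma semiconj_extendPerm : Semiconj f σ (extendPerm f (σ, τ)) :=
  fun a => (extendPerm_apply_apply f σ τ a).symm

lemma exists_extendPerm_eq_of_semiconj {P : Perm β} (hP : Semiconj f σ P) :
    ∃ τ, extendPerm f (σ, τ) = P := by
  have hrange : ∀ b, P b ∈ range f ↔ b ∈ range f := fun b => by
    refine ⟨fun ⟨a, ha⟩ => ⟨σ.symm a, P.injective ?_⟩,
      fun ⟨a, ha⟩ => ⟨σ a, by rw [hP, ha]⟩⟩
    rw [← hP, apply_symm_apply, ha]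
  refine ⟨P.subtypePerm fun b => not_congr (hrange b), Equiv.ext fun b => ?_⟩
  by_cases hb : b ∈ range f
  · obtain ⟨a, rfl⟩ := hb
    rw [extendPerm_apply_apply, hP]
  · exact extendPerm_apply_coe f σ _ ⟨b, hb⟩

lemma card_fixedPoints_extendPerm [Finite β] :
    Nat.card (fixedPoints (extendPerm f (σ, τ))) =
      Nat.card (fixedPoints σ) + Nat.card (fixedPoints τ) := by
  have : Finite α := Finite.of_injective f f.injective
  simp only [extendPerm, MonoidHom.coe_comp, comp_apply, MonoidHom.coe_prodMap, Prod.map_apply,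
    Perm.subtypeCongrHom_apply, Perm.subtypeCongr, card_fixedPoints_permCongr,
    card_fixedPoints_sumCongr, MonoidHom.coe_coe, permCongrHom_coe, MonoidHom.id_apply]

section Involutions

variable [Finite β] {σ : Perm α}

lemma extendPerm_mem_involWithFix_iff (hσ : σ * σ = 1) (hfix : Nat.card (fixedPoints σ) = 0)
    {τ : Perm {b // b ∉ range f}} {g : ℕ} :
    extendPerm f (σ, τ) ∈ involWithFix β g ↔ τ ∈ involWithFix _ g := by
  simp only [involWithFix, mem_ofPred_eq, card_fixedPoints_extendPerm, hfix, zero_add,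
    ← map_mul, Prod.mk_mul_mk, hσ, ← map_one (extendPerm f), (extendPerm_injective f).eq_iff,
    Prod.mk_eq_one, true_and]

lemma card_involWithFix_semiconj (hσ : σ * σ = 1) (hfix : Nat.card (fixedPoints σ) = 0)
    (g : ℕ) :
    Nat.card {P // P ∈ involWithFix β g ∧ Semiconj f σ P} =
      Nat.card (involWithFix {b // b ∉ range f} g) := by
  symm
  refine Nat.card_congr <| Equiv.ofBijective
    (fun τ => ⟨extendPerm f (σ, τ), (extendPerm_mem_involWithFix_iff f hσ hfix).2 τ.2,
      semiconj_extendPerm f σ τ⟩) ⟨fun τ τ' h => ?_, fun ⟨P, hP, hsemi⟩ => ?_⟩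
  · have := extendPerm_injective f (congrArg Subtype.val h)
    exact Subtype.ext (Prod.ext_iff.1 this).2
  · obtain ⟨τ, rfl⟩ := exists_extendPerm_eq_of_semiconj f σ hsemi
    exact ⟨⟨τ, (extendPerm_mem_involWithFix_iff f hσ hfix).1 hP⟩, rfl⟩

end Involutions

end Extend

lemma card_compl_range_embedding {α β : Type*} [Finite β] (f : α ↪ β) :
    Nat.card {b // b ∉ range f} = Nat.card β - Nat.card α := by
  have := Fintype.ofFinite β
  have := Fintype.ofFinite (range f)
  rw [Nat.card_eq_fintype_card, Fintype.card_subtype_compl, Nat.card_eq_fintype_card,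
    ← Nat.card_range_of_injective f.injective, Nat.card_eq_fintype_card]

lemma card_involWithFix_semiconj_fin {α : Type*} [Finite α] {M : ℕ} (f : α ↪ Fin M)
    {σ : Perm α} (hσ : σ * σ = 1) (hσfix : Nat.card (fixedPoints σ) = 0)
    (g : ℕ) :
    Nat.card {P // P ∈ involWithFix (Fin M) g ∧ Semiconj f σ P} =
      Nat.card (involWithFix (Fin (M - Nat.card α)) g) := by
  rw [card_involWithFix_semiconj f hσ hσfix,
    card_involWithFix_congr (Finite.equivFinOfCardEq
      ((card_compl_range_embedding f).trans (by rw [Nat.card_fin])))]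

lemma card_pairE (g h N : ℕ) :
    Nat.card (pairE g h N) =
      Nat.card (involWithFix (Fin N) g) * Nat.card (involWithFix (Fin N) h) := by
  rw [pairE_eq_prod, Nat.card_congr (Equiv.Set.prod _ _), Nat.card_prod]

lemma card_pairE_semiconj {α : Type*} [Finite α] {M : ℕ} (f : α ↪ Fin M) {σ τ : Perm α}
    (hσ : σ * σ = 1) (hσfix : Nat.card (fixedPoints σ) = 0)
    (hτ : τ * τ = 1) (hτfix : Nat.card (fixedPoints τ) = 0) (g h : ℕ) :
    Nat.card {p : Perm (Fin M) × Perm (Fin M) //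
        p ∈ pairE g h M ∧ Semiconj f σ p.1 ∧ Semiconj f τ p.2} =
      Nat.card (pairE g h (M - Nat.card α)) := by
  have e : {p : Perm (Fin M) × Perm (Fin M) //
        p ∈ pairE g h M ∧ Semiconj f σ p.1 ∧ Semiconj f τ p.2} ≃
      {G // G ∈ involWithFix (Fin M) g ∧ Semiconj f σ G} ×
        {H // H ∈ involWithFix (Fin M) h ∧ Semiconj f τ H} :=
    (subtypeEquivRight fun p => by rw [pairE_eq_prod, mem_prod]; tauto).trans
      subtypeProdEquivProd
  rw [Nat.card_congr e, Nat.card_prod, card_involWithFix_semiconj_fin f hσ hσfix,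
    card_involWithFix_semiconj_fin f hτ hτfix, card_pairE]

lemma card_subtype_prod_eq_sum {A B : Type*} [Fintype A] [Finite B] (p : A → B → Prop) :
    Nat.card {q : A × B // p q.1 q.2} = ∑ a, Nat.card {b // p a b} := by
  rw [Nat.card_congr (subtypeProdEquivSigmaSubtype p), Nat.card_sigma]

lemma card_subtype_prod_mem_eq_sum {A B : Type*} [Fintype A] [Finite B] (s : Set A)
    (p : A → B → Prop) :
    Nat.card {q : A × B // q.1 ∈ s ∧ p q.1 q.2} =
      ∑ a ∈ s.toFinset, Nat.card {b // p a b} := by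
  rw [card_subtype_prod_eq_sum fun a b => a ∈ s ∧ p a b,
    ← Finset.sum_subset (Finset.subset_univ s.toFinset)]
  · exact Finset.sum_congr rfl fun a ha => by simp [mem_toFinset.1 ha]
  · intro a _ ha
    simp [mem_toFinset.not.1 ha]

lemma card_fixedPoints_eq_zero_of_snd_ne {ι : Type*} {σ : Perm (ι × Bool)}
    (hσ : ∀ a, (σ a).2 ≠ a.2) :
    Nat.card (fixedPoints σ) = 0 :=
  have : IsEmpty (fixedPoints σ) := ⟨fun ⟨a, ha⟩ => hσ a (congrArg Prod.snd ha)⟩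
  Nat.card_of_isEmpty

section CycleModel

variable (t : ℕ)

def cycleModelG : Perm (Fin t × Bool) := prodCongr (Equiv.refl _) boolNot

@[simp] lemma cycleModelG_apply (a : Fin t × Bool) : cycleModelG t a = (a.1, !a.2) := rfl

lemma cycleModelG_mul_self : cycleModelG t * cycleModelG t = 1 := by
  ext a : 1
  simp

lemma card_fixedPoints_cycleModelG : Nat.card (fixedPoints (cycleModelG t)) = 0 :=
  card_fixedPoints_eq_zero_of_snd_ne fun a => by simp

variable [NeZero t]

def cycleModelH : Perm (Fin t × Bool) :=
  Involutive.toPerm (fun a => if a.2 then (a.1 + 1, false) else (a.1 - 1, true)) fun a => by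
    rcases a with ⟨j, _ | _⟩ <;> simp

@[simp] lemma cycleModelH_apply_true (j : Fin t) : cycleModelH t (j, true) = (j + 1, false) := rfl

@[simp] lemma cycleModelH_apply_false (j : Fin t) : cycleModelH t (j, false) = (j - 1, true) := rfl

lemma cycleModelH_mul_self : cycleModelH t * cycleModelH t = 1 :=
  Equiv.ext (Involutive.toPerm_involutive _)

lemma card_fixedPoints_cycleModelH : Nat.card (fixedPoints (cycleModelH t)) = 0 :=
  card_fixedPoints_eq_zero_of_snd_ne fun ⟨j, b⟩ => by cases b <;> simp

open Fin.NatCast in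
lemma cycleModel_pow_apply (n : ℕ) :
    ((cycleModelH t * cycleModelG t) ^ n) (0, false) = ((n : Fin t), false) := by
  induction n with
  | zero => simp
  | succ n ih => rw [pow_succ', Perm.mul_apply, ih]; simp

end CycleModel

lemma Equiv.Perm.SameCycle.apply_of_conj_eq_inv {α : Type*} {L G : Perm α}
    (hconj : G * L * G⁻¹ = L⁻¹) {y z : α} (h : L.SameCycle y z) :
    L.SameCycle (G y) (G z) := by
  simpa only [hconj, Perm.sameCycle_inv] using h.conj (g := G)

lemma conj_mul_eq_inv_of_mul_self {Γ : Type*} [Group Γ] {G H : Γ} (hG : G * G = 1)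
    (hH : H * H = 1) : G * (H * G) * G⁻¹ = (H * G)⁻¹ := by
  rw [mul_inv_rev, inv_eq_of_mul_eq_one_right hG, inv_eq_of_mul_eq_one_right hH, mul_assoc,
    mul_assoc, hG, mul_one]

section Orbit

variable {N : ℕ} (L : Perm (Fin N))

lemma card_orb_eq_minimalPeriod (x : Fin N) : Nat.card (orb L x) = minimalPeriod L x := by
  have hx := L.injective.mem_periodicPts x
  have horb : orb L x = (fun n => L^[n] x) '' Iio (minimalPeriod L x) := by
    ext y
    simp only [orb, mem_ofPred_eq, mem_image, mem_Iio, ← Perm.coe_pow]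
    refine ⟨fun ⟨n, hn⟩ => ⟨n % minimalPeriod L x,
        Nat.mod_lt _ (minimalPeriod_pos_of_mem_periodicPts hx), ?_⟩,
      fun ⟨n, _, hn⟩ => ⟨n, hn⟩⟩
    rw [Perm.coe_pow, iterate_mod_minimalPeriod_eq, ← Perm.coe_pow, hn]
  rw [horb, Nat.card_image_of_injOn iterate_injOn_Iio_minimalPeriod, Nat.card_coe_set_eq,
    ncard_Iio_nat]

lemma mem_orb_iff_sameCycle {x y : Fin N} : y ∈ orb L x ↔ L.SameCycle x y :=
  ⟨fun ⟨n, hn⟩ => ⟨n, by rw [zpow_natCast, hn]⟩, fun h => h.exists_nat_pow_eq⟩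

lemma apply_notMem_orb_of_image_orb_ne {G H : Perm (Fin N)} (hG : G * G = 1) (hH : H * H = 1)
    {x y : Fin N} (hasym : ⇑G '' orb (H * G) x ≠ orb (H * G) x) (hy : y ∈ orb (H * G) x) :
    G y ∉ orb (H * G) x := by
  intro hGy
  have hmaps : ∀ z ∈ orb (H * G) x, G z ∈ orb (H * G) x := fun z hz => by
    rw [mem_orb_iff_sameCycle] at hy hz hGy ⊢
    exact hGy.trans ((hy.symm.trans hz).apply_of_conj_eq_inv (conj_mul_eq_inv_of_mul_self hG hH))
  refine hasym (Subset.antisymm (image_subset_iff.2 hmaps) fun z hz => ⟨G z, hmaps z hz, ?_⟩)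
  rw [← Perm.mul_apply, hG, Perm.one_apply]

end Orbit

def OnAsymCycle {N : ℕ} (t : ℕ) (G H : Perm (Fin N)) (x : Fin N) : Prop :=
  ⇑G '' orb (H * G) x ≠ orb (H * G) x ∧ Nat.card (orb (H * G) x) = t

section CycleEmbedding

variable {N t : ℕ} [NeZero t] {G H : Perm (Fin N)} {f : Fin t × Bool ↪ Fin N}

open Fin.NatCast in
lemma pow_apply_of_semiconj (hGf : Semiconj f (cycleModelG t) G)
    (hHf : Semiconj f (cycleModelH t) H) (n : ℕ) :
    ((H * G) ^ n) (f (0, false)) = f ((n : Fin t), false) := by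
  have hL : Semiconj f ⇑(cycleModelH t * cycleModelG t) ⇑(H * G) := hHf.comp_right hGf
  rw [← cycleModel_pow_apply, Perm.coe_pow, Perm.coe_pow]
  exact ((hL.iterate_right n).eq _).symm

lemma orb_eq_range_of_semiconj (hGf : Semiconj f (cycleModelG t) G)
    (hHf : Semiconj f (cycleModelH t) H) :
    orb (H * G) (f (0, false)) = range fun j => f (j, false) := by
  ext y
  refine ⟨fun ⟨n, hn⟩ => ⟨_, (pow_apply_of_semiconj hGf hHf n).symm.trans hn⟩,
    fun ⟨j, hj⟩ => ⟨j, ?_⟩⟩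
  rw [pow_apply_of_semiconj hGf hHf, Fin.cast_val_eq_self]
  exact hj

lemma onAsymCycle_of_semiconj (hGf : Semiconj f (cycleModelG t) G)
    (hHf : Semiconj f (cycleModelH t) H) : OnAsymCycle t G H (f (0, false)) := by
  have himage : ⇑G '' (range fun j => f (j, false)) = range fun j => f (j, true) := by
    rw [← range_comp]
    exact congrArg range (funext fun j => (hGf (j, false)).symm)
  rw [OnAsymCycle, orb_eq_range_of_semiconj hGf hHf, himage]
  refine ⟨fun h => ?_, ?_⟩
  · obtain ⟨j, hj⟩ : f (0, true) ∈ range fun j => f (j, false) := h ▸ mem_range_self 0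
    simpa using f.injective hj
  · have hinj : Injective fun j : Fin t => f (j, false) :=
      f.injective.comp (Prod.mk_left_injective false)
    rw [Nat.card_range_of_injective hinj, Nat.card_eq_fintype_card, Fintype.card_fin]

lemma eq_of_semiconj {f' : Fin t × Bool ↪ Fin N} (hGf : Semiconj f (cycleModelG t) G)
    (hHf : Semiconj f (cycleModelH t) H) (hGf' : Semiconj f' (cycleModelG t) G)
    (hHf' : Semiconj f' (cycleModelH t) H) (h : f (0, false) = f' (0, false)) : f = f' := by
  have hfalse : ∀ j, f (j, false) = f' (j, false) := fun j => by
    rw [← Fin.cast_val_eq_self j, ← pow_apply_of_semiconj hGf hHf,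
      ← pow_apply_of_semiconj hGf' hHf', h]
  refine DFunLike.ext _ _ fun ⟨j, b⟩ => ?_
  cases b
  · exact hfalse j
  · simpa using (hGf (j, false)).trans ((congrArg G (hfalse j)).trans (hGf' (j, false)).symm)

lemma exists_semiconj_of_onAsymCycle (hG : G * G = 1) (hH : H * H = 1) {x : Fin N}
    (hx : OnAsymCycle t G H x) :
    ∃ f : Fin t × Bool ↪ Fin N,
      Semiconj f (cycleModelG t) G ∧ Semiconj f (cycleModelH t) H ∧ f (0, false) = x := by
  set L := H * G
  have hGG : ∀ y, G (G y) = y := fun y => by rw [← Perm.mul_apply, hG, Perm.one_apply]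
  have hHH : ∀ y, H (H y) = y := fun y => by rw [← Perm.mul_apply, hH, Perm.one_apply]
  have hper : minimalPeriod L x = t := (card_orb_eq_minimalPeriod L x).symm.trans hx.2
  have hinj : ∀ i j : Fin t, (L ^ (i : ℕ)) x = (L ^ (j : ℕ)) x → i = j := fun i j h =>
    Fin.ext <| iterate_injOn_Iio_minimalPeriod (f := L) (show (i : ℕ) < _ by rw [hper]; exact i.2)
      (show (j : ℕ) < _ by rw [hper]; exact j.2) (by simpa only [Perm.coe_pow] using h)
  have hsucc : ∀ j : Fin t, (L ^ ((j + 1 : Fin t) : ℕ)) x = H (G ((L ^ (j : ℕ)) x)) :=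
    fun j => by
    have hmod := iterate_mod_minimalPeriod_eq (f := L) (x := x) (n := j + 1)
    rw [hper] at hmod
    rw [Fin.val_add, Fin.val_one', Nat.add_mod_mod, Perm.coe_pow, hmod, iterate_succ_apply',
      ← Perm.coe_pow]
    rfl
  have hcross : ∀ i j : Fin t, G ((L ^ (i : ℕ)) x) ≠ (L ^ (j : ℕ)) x := fun i j h =>
    apply_notMem_orb_of_image_orb_ne hG hH hx.1 ⟨i, rfl⟩ (h ▸ ⟨j, rfl⟩)
  let F : Fin t × Bool → Fin N := fun a =>
    bif a.2 then G ((L ^ (a.1 : ℕ)) x) else (L ^ (a.1 : ℕ)) x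
  have hF : Injective F := by
    rintro ⟨i, _ | _⟩ ⟨j, _ | _⟩ h <;> simp only [F, cond_true, cond_false] at h
    · rw [hinj i j h]
    · exact absurd h.symm (hcross j i)
    · exact absurd h (hcross i j)
    · rw [hinj i j (G.injective h)]
  refine ⟨⟨F, hF⟩, fun ⟨j, b⟩ => ?_, fun ⟨j, b⟩ => ?_, by simp [F]⟩ <;> cases b
  · rfl
  · exact (hGG _).symm
  · have := hsucc (j - 1)
    rw [sub_add_cancel] at this
    simp [F, this, hHH]
  · exact hsucc j

end CycleEmbedding

lemma card_cycleEmbedding_eq_card_onAsymCycle (g h N t : ℕ) [NeZero t] :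
    Nat.card {q : (Fin t × Bool ↪ Fin N) × (Perm (Fin N) × Perm (Fin N)) //
        q.2 ∈ pairE g h N ∧ Semiconj q.1 (cycleModelG t) q.2.1 ∧
          Semiconj q.1 (cycleModelH t) q.2.2} =
      Nat.card {q : (Perm (Fin N) × Perm (Fin N)) × Fin N //
        q.1 ∈ pairE g h N ∧ OnAsymCycle t q.1.1 q.1.2 q.2} := by
  refine Nat.card_congr <| Equiv.ofBijective
    (fun q => ⟨(q.1.2, q.1.1 (0, false)), q.2.1, onAsymCycle_of_semiconj q.2.2.1 q.2.2.2⟩)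
    ⟨fun ⟨⟨f, p⟩, hp, hG, hH⟩ ⟨⟨f', p'⟩, hp', hG', hH'⟩ hq => ?_,
      fun ⟨⟨p, x⟩, hp, hx⟩ => ?_⟩
  · obtain ⟨rfl, hx⟩ := Prod.ext_iff.1 (congrArg Subtype.val hq)
    cases eq_of_semiconj hG hH hG' hH' hx
    rfl
  · obtain ⟨f, hG, hH, rfl⟩ := exists_semiconj_of_onAsymCycle hp.1 hp.2.1 hx
    exact ⟨⟨(f, p), hp, hG, hH⟩, rfl⟩

theorem sum_asymCount (g h N t : ℕ) [NeZero t] :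
    ∑ p ∈ (pairE g h N).toFinset, asymCount N t p.1 p.2 =
      N.descFactorial (2 * t) * Nat.card (pairE g h (N - 2 * t)) := by
  have hcard := card_cycleEmbedding_eq_card_onAsymCycle g h N t
  rw [card_subtype_prod_eq_sum fun (f : Fin t × Bool ↪ Fin N) p =>
      p ∈ pairE g h N ∧ Semiconj f (cycleModelG t) p.1 ∧ Semiconj f (cycleModelH t) p.2,
    card_subtype_prod_mem_eq_sum (pairE g h N) fun p x => OnAsymCycle t p.1 p.2 x] at hcard
  simp only [card_pairE_semiconj _ (cycleModelG_mul_self t) (card_fixedPoints_cycleModelG t)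
    (cycleModelH_mul_self t) (card_fixedPoints_cycleModelH t)] at hcard
  have hsize : Nat.card (Fin t × Bool) = 2 * t := by simp [mul_comm]
  rw [Finset.sum_const, Finset.card_univ, Fintype.card_embedding_eq, smul_eq_mul,
    Fintype.card_fin, ← Nat.card_eq_fintype_card (α := Fin t × Bool), hsize] at hcard
  exact hcard.symm

lemma card_boolEmbedding_eq_card_moved (g M : ℕ) :
    Nat.card {q : (Bool ↪ Fin M) × Perm (Fin M) //
        q.2 ∈ involWithFix (Fin M) g ∧ Semiconj q.1 boolNot q.2} =
      Nat.card {q : Perm (Fin M) × Fin M //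
        q.1 ∈ involWithFix (Fin M) g ∧ q.1 q.2 ≠ q.2} := by
  refine Nat.card_congr <| Equiv.ofBijective
    (fun q => ⟨(q.1.2, q.1.1 false), q.2.1,
      fun h => Bool.noConfusion (q.1.1.injective ((q.2.2 false).trans h))⟩)
    ⟨fun ⟨⟨f, G⟩, hG, hf⟩ ⟨⟨f', G'⟩, hG', hf'⟩ hq => ?_,
      fun ⟨⟨G, x⟩, hG, hx⟩ => ?_⟩
  · obtain ⟨rfl, hx⟩ := Prod.ext_iff.1 (congrArg Subtype.val hq)
    have htrue : f true = f' true := (hf false).trans ((congrArg G hx).trans (hf' false).symm)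
    cases DFunLike.ext f f' (Bool.forall_bool.2 ⟨hx, htrue⟩)
    rfl
  · have hGG : G (G x) = x := by rw [← Perm.mul_apply, hG.1, Perm.one_apply]
    refine ⟨⟨(⟨fun b => bif b then G x else x, ?_⟩, G), hG, ?_⟩, rfl⟩
    · rintro (_ | _) (_ | _) h
      exacts [rfl, absurd h.symm hx, absurd h hx, rfl]
    · rintro (_ | _)
      exacts [rfl, hGG.symm]

lemma card_involWithFix_mul_sub (g M : ℕ) :
    Nat.card (involWithFix (Fin M) g) * (M - g) =
      M.descFactorial 2 * Nat.card (involWithFix (Fin (M - 2)) g) := by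
  have hcard := card_boolEmbedding_eq_card_moved g M
  rw [card_subtype_prod_eq_sum fun (f : Bool ↪ Fin M) G =>
      G ∈ involWithFix (Fin M) g ∧ Semiconj f boolNot G,
    card_subtype_prod_mem_eq_sum (involWithFix (Fin M) g) fun G x => G x ≠ x] at hcard
  have hterm : ∀ G ∈ (involWithFix (Fin M) g).toFinset, Nat.card {x // G x ≠ x} = M - g :=
    fun G hG => by
      rw [Nat.card_eq_fintype_card, Fintype.card_subtype_compl, Fintype.card_fin,
        ← Nat.card_eq_fintype_card]
      exact congrArg (M - ·) (mem_toFinset.1 hG).2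
  have hnot : Nat.card (fixedPoints boolNot) = 0 :=
    have : IsEmpty (fixedPoints boolNot) := ⟨fun ⟨b, hb⟩ => by cases b <;> cases hb⟩
    Nat.card_of_isEmpty
  simp only [card_involWithFix_semiconj_fin _ (Equiv.ext Bool.not_not) hnot,
    Finset.sum_const, Finset.card_univ, Fintype.card_embedding_eq, Fintype.card_fin,
    Fintype.card_bool, smul_eq_mul] at hcard
  rw [Finset.sum_congr rfl hterm, Finset.sum_const, smul_eq_mul, ← Nat.card_eq_card_toFinset,
    Nat.card_eq_fintype_card (α := Bool), Fintype.card_bool] at hcard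
  exact hcard.symm

lemma card_involWithFix_eq_zero_of_lt {g M : ℕ} (h : M < g) :
    Nat.card (involWithFix (Fin M) g) = 0 :=
  have : IsEmpty (involWithFix (Fin M) g) := ⟨fun ⟨τ, _, hτ⟩ => by
    have := Finite.card_subtype_le (· ∈ fixedPoints τ)
    rw [Nat.card_fin] at this
    exact absurd (hτ ▸ this) (by omega)⟩
  Nat.card_of_isEmpty

lemma card_involWithFix_pos {g M : ℕ} (hg : g ≤ M) (hpar : Even (M - g)) :
    0 < Nat.card (involWithFix (Fin M) g) := by
  obtain ⟨k, hk⟩ := hpar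
  obtain rfl : M = g + 2 * k := by omega
  clear hg hk
  induction k with
  | zero =>
    have : (1 : Perm (Fin g)) ∈ involWithFix (Fin (g + 2 * 0)) g := ⟨mul_one 1, by simp⟩
    exact Nat.card_pos_iff.2 ⟨⟨⟨1, this⟩⟩, inferInstance⟩
  | succ k ih =>
    have hrec := card_involWithFix_mul_sub g (g + 2 * (k + 1))
    rw [show g + 2 * (k + 1) - 2 = g + 2 * k by omega] at hrec
    refine Nat.pos_of_ne_zero fun h0 => ?_
    rw [h0, zero_mul] at hrec
    exact (Nat.mul_pos (Nat.descFactorial_pos.2 (by omega)) ih).ne hrec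

lemma cast_card_involWithFix_mul_sub {M : ℕ} (hM : 2 ≤ M) (g : ℕ) :
    (Nat.card (involWithFix (Fin M) g) : ℝ) * (M - g) =
      M * (M - 1) * Nat.card (involWithFix (Fin (M - 2)) g) := by
  rcases le_or_gt g M with hg | hg
  · have hrec := congrArg (Nat.cast : ℕ → ℝ) (card_involWithFix_mul_sub g M)
    push_cast [Nat.cast_sub hg, Nat.cast_descFactorial_two] at hrec
    exact hrec
  · rw [card_involWithFix_eq_zero_of_lt hg, card_involWithFix_eq_zero_of_lt (by omega)]
    simp

lemma card_involWithFix_mul_prod (g : ℕ) {N t : ℕ} (ht : 2 * t ≤ N) :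
    (Nat.card (involWithFix (Fin N) g) : ℝ) * ∏ j ∈ Finset.range t, ((N : ℝ) - 2 * j - g) =
      (∏ j ∈ Finset.range t, ((N : ℝ) - 2 * j) * ((N : ℝ) - 2 * j - 1)) *
        Nat.card (involWithFix (Fin (N - 2 * t)) g) := by
  induction t with
  | zero => simp
  | succ t ih =>
    have hrec := cast_card_involWithFix_mul_sub (M := N - 2 * t) (by omega) g
    rw [show N - 2 * t - 2 = N - 2 * (t + 1) by omega, Nat.cast_sub (by omega)] at hrec
    rw [Finset.prod_range_succ, Finset.prod_range_succ, ← mul_assoc, ih (by omega)]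
    push_cast at hrec
    linear_combination
      (∏ j ∈ Finset.range t, ((N : ℝ) - 2 * j) * ((N : ℝ) - 2 * j - 1)) * hrec

lemma cast_descFactorial_two_mul {N t : ℕ} (ht : 2 * t ≤ N) :
    (N.descFactorial (2 * t) : ℝ) =
      ∏ j ∈ Finset.range t, ((N : ℝ) - 2 * j) * ((N : ℝ) - 2 * j - 1) := by
  induction t with
  | zero => simp
  | succ t ih =>
    rw [Finset.prod_range_succ, ← ih (by omega), show 2 * (t + 1) = 2 * t + 1 + 1 by ring,
      Nat.descFactorial_succ, Nat.descFactorial_succ]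
    push_cast [Nat.cast_sub (by omega : 2 * t + 1 ≤ N), Nat.cast_sub (by omega : 2 * t ≤ N)]
    ring

lemma card_pairE_mul_prod (g h : ℕ) {N t : ℕ} (ht : 2 * t ≤ N) :
    (Nat.card (pairE g h N) : ℝ) *
        ((∏ j ∈ Finset.range t, ((N : ℝ) - 2 * j - g)) *
          ∏ j ∈ Finset.range t, ((N : ℝ) - 2 * j - h)) =
      (N.descFactorial (2 * t) : ℝ) ^ 2 * Nat.card (pairE g h (N - 2 * t)) := by
  have hg := card_involWithFix_mul_prod g ht
  have hh := card_involWithFix_mul_prod h ht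
  rw [← cast_descFactorial_two_mul ht] at hg hh
  rw [card_pairE, card_pairE]
  push_cast
  linear_combination
    (Nat.card (involWithFix (Fin N) h) * ∏ j ∈ Finset.range t, ((N : ℝ) - 2 * j - h)) * hg +
      (N.descFactorial (2 * t) * Nat.card (involWithFix (Fin (N - 2 * t)) g) : ℝ) * hh

lemma prod_one_sub_mul_cast_descFactorial (g h : ℕ) {N t : ℕ} (ht : 2 * t ≤ N) :
    (∏ j ∈ Finset.range t,
        (1 - ((g : ℝ) - 1) / ((N : ℝ) - (2 * j + 1))) * (1 - (h : ℝ) / ((N : ℝ) - 2 * j))) *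
        N.descFactorial (2 * t) =
      (∏ j ∈ Finset.range t, ((N : ℝ) - 2 * j - g)) *
        ∏ j ∈ Finset.range t, ((N : ℝ) - 2 * j - h) := by
  rw [cast_descFactorial_two_mul ht, ← Finset.prod_mul_distrib, ← Finset.prod_mul_distrib]
  refine Finset.prod_congr rfl fun j hj => ?_
  have hj' : (2 * j + 2 : ℝ) ≤ N := by
    rw [Finset.mem_range] at hj
    exact_mod_cast (by omega : 2 * j + 2 ≤ N)
  have h1 : (N : ℝ) - 2 * j ≠ 0 := by linarith
  have h2 : (N : ℝ) - (2 * j + 1) ≠ 0 := by linarith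
  field_simp
  ring

lemma card_pairE_mul_prod_one_sub (g h : ℕ) {N t : ℕ} (ht : 2 * t ≤ N) :
    (Nat.card (pairE g h N) : ℝ) * ∏ j ∈ Finset.range t,
        (1 - ((g : ℝ) - 1) / ((N : ℝ) - (2 * j + 1))) * (1 - (h : ℝ) / ((N : ℝ) - 2 * j)) =
      N.descFactorial (2 * t) * Nat.card (pairE g h (N - 2 * t)) := by
  have hD : (N.descFactorial (2 * t) : ℝ) ≠ 0 :=
    Nat.cast_ne_zero.2 (Nat.descFactorial_pos.2 ht).ne'
  refine mul_right_cancel₀ hD ?_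
  linear_combination (Nat.card (pairE g h N) : ℝ) * prod_one_sub_mul_cast_descFactorial g h ht +
    card_pairE_mul_prod g h ht

theorem expected_asymmetric_fraction_general (N t g h : ℕ)
    (ht : 1 ≤ t) (htN : 2 * t ≤ N)
    (hgN : g ≤ N) (hhN : h ≤ N)
    (heg : Even (N - g)) (heh : Even (N - h)) :
    (∑ᶠ p ∈ pairE g h N, (asymCount N t p.1 p.2 : ℝ) / N) /
        (Nat.card (pairE g h N) : ℝ) =
      (1 / (N : ℝ)) *
        ∏ j ∈ Finset.range t,
          (1 - ((g : ℝ) - 1) / ((N : ℝ) - (2 * j + 1))) *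
            (1 - (h : ℝ) / ((N : ℝ) - 2 * j)) ∧
    (∑ᶠ p ∈ pairE g h N, (asymCount N t p.1 p.2 : ℝ) / N) /
        (Nat.card (pairE g h N) : ℝ) =
      ((N.descFactorial (2 * t) : ℝ) / N) *
        (Nat.card (pairE g h (N - 2 * t)) : ℝ) / (Nat.card (pairE g h N) : ℝ) := by
  have : NeZero t := ⟨by omega⟩
  have hN : (N : ℝ) ≠ 0 := Nat.cast_ne_zero.2 (by omega)
  have hE : (Nat.card (pairE g h N) : ℝ) ≠ 0 := by
    rw [card_pairE]
    exact Nat.cast_ne_zero.2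
      (Nat.mul_pos (card_involWithFix_pos hgN heg) (card_involWithFix_pos hhN heh)).ne'
  have hsum : ∑ᶠ p ∈ pairE g h N, (asymCount N t p.1 p.2 : ℝ) / N =
      N.descFactorial (2 * t) * Nat.card (pairE g h (N - 2 * t)) / N := by
    rw [finsum_mem_eq_toFinset_sum, ← Finset.sum_div, ← Nat.cast_sum, sum_asymCount,
      Nat.cast_mul]
  rw [hsum]
  refine ⟨?_, by ring⟩
  rw [← card_pairE_mul_prod_one_sub g h htN]
  field_simp

/-- The expected fraction of the space occupied by asymmetric `t`-cycles of `H ∘ G`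
equals `(1/N)·Π_{j=0}^{t-1}(1-(g-1)/(N-(2j+1)))(1-h/(N-2j))`, which equals
`(N^{underline(2t)}/N)·#E(g,h,N-2t)/#E(g,h,N)`. -/
theorem expected_asymmetric_fraction (N t g h : ℕ)
    (ht : 1 ≤ t) (htN : 2 * t ≤ N)
    (hg : 1 ≤ g) (hgN : g ≤ N) (hh : 1 ≤ h) (hhN : h ≤ N)
    (heg : Even (N - g)) (heh : Even (N - h)) :
    (∑ᶠ p ∈ pairE g h N, (asymCount N t p.1 p.2 : ℝ) / N) /
        (Nat.card (pairE g h N) : ℝ) =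
      (1 / (N : ℝ)) *
        ∏ j ∈ Finset.range t,
          (1 - ((g : ℝ) - 1) / ((N : ℝ) - (2 * j + 1))) *
            (1 - (h : ℝ) / ((N : ℝ) - 2 * j)) ∧
    (∑ᶠ p ∈ pairE g h N, (asymCount N t p.1 p.2 : ℝ) / N) /
        (Nat.card (pairE g h N) : ℝ) =
      ((N.descFactorial (2 * t) : ℝ) / N) *
        (Nat.card (pairE g h (N - 2 * t)) : ℝ) / (Nat.card (pairE g h N) : ℝ) :=
  expected_asymmetric_fraction_general N t g h ht htN hgN hhN heg heh
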